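/- arXiv:1209.4691 — 4 statements merged into one kernel-verified Lean document; each statement's English description precedes it below -/
import Mathlib

section
/- Let ω be an infinite word over a finite integer alphabet and let M be a natural number such that for all n ≥ 1 and all factors B, B′ of ω of length n one has |ΣB − ΣB′| < M. Then for any two nonempty factors B and B′ of ω (of possibly different lengths), |slope(B) − slope(B′)| < M/|B| + M/|B′|. -/
/-- `B` is a factor of the infinite word `ω`. -/
def Factor (ω : ℕ → ℤ) (B : List ℤ) : Prop :=
  ∃ m : ℕ, B = (List.range B.length).map (fun i => ω (m + i))

/-- `ω` has bounded additive complexity: there is `M` such that for every `n ≥ 1`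
the set of sums of factors of length `n` has at most `M` elements. -/
def BoundedAddComplexity (ω : ℕ → ℤ) : Prop :=
  ∃ M : ℕ, ∀ n : ℕ, 1 ≤ n →
    ∃ T : Finset ℤ, T.card ≤ M ∧
      ∀ B : List ℤ, Factor ω B → B.length = n → B.sum ∈ T

/-- The slope of a finite word. -/
def wordSlope (B : List ℤ) : ℚ := (B.sum : ℚ) / (B.length : ℚ)

/-- `ω` has slope `L`. -/
def HasSlope (ω : ℕ → ℤ) (L : ℝ) : Prop :=
  Filter.Tendsto (fun n : ℕ => (∑ i ∈ Finset.range n, (ω i : ℝ)) / n)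
    Filter.atTop (nhds L)

/-!
Put `p = |B|`, `q = |B'|` and let `P` be the sum of the first `p q` letters of `ω`. Cutting
that prefix into `q` blocks of length `p` and comparing each block with `B` gives
`|P - q ΣB| < q M`; cutting it into `p` blocks of length `q` gives `|P - p ΣB'| < p M`.
Hence `|q ΣB - p ΣB'| < (p + q) M`, and dividing by `p q` gives the bound on slopes.
-/

open Finset

theorem sum_range_mul_eq_sum_blocks {M : Type*} [AddCommMonoid M] (f : ℕ → M) (k r : ℕ) :
    ∑ i ∈ range (k * r), f i = ∑ j ∈ range k, ∑ i ∈ range r, f (j * r + i) := by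
  induction k with
  | zero => simp
  | succ k ih => rw [Nat.succ_mul, sum_range_add, ih, sum_range_succ]

theorem abs_sum_range_mul_sub_nsmul_lt {G : Type*} [AddCommGroup G] [LinearOrder G]
    [IsOrderedAddMonoid G] (f : ℕ → G) {r k : ℕ} {S C : G}
    (h : ∀ m, |∑ i ∈ range r, f (m + i) - S| < C) (hk : 0 < k) :
    |∑ i ∈ range (k * r), f i - k • S| < k • C := by
  have hsplit : ∑ i ∈ range (k * r), f i - k • S
      = ∑ j ∈ range k, (∑ i ∈ range r, f (j * r + i) - S) := by
    rw [sum_range_mul_eq_sum_blocks, sum_sub_distrib, sum_const, card_range]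
  calc |∑ i ∈ range (k * r), f i - k • S|
      ≤ ∑ j ∈ range k, |∑ i ∈ range r, f (j * r + i) - S| := hsplit ▸ abs_sum_le_sum_abs _ _
    _ < ∑ _j ∈ range k, C := sum_lt_sum_of_nonempty (nonempty_range_iff.mpr hk.ne') fun _ _ => h _
    _ = k • C := by rw [sum_const, card_range]

theorem abs_div_sub_div_lt_of_abs_mul_sub_lt {K : Type*} [Field K] [LinearOrder K]
    [IsStrictOrderedRing K] {a b p q M : K} (hp : 0 < p) (hq : 0 < q)
    (h : |q * a - p * b| < (q + p) * M) :
    |a / p - b / q| < M / p + M / q := by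
  have hpq : 0 < p * q := mul_pos hp hq
  have hdiff : a / p - b / q = (q * a - p * b) / (p * q) := by field_simp
  have hsum : M / p + M / q = (q + p) * M / (p * q) := by field_simp
  rw [hdiff, hsum, abs_div, abs_of_pos hpq]
  exact div_lt_div_of_pos_right h hpq

theorem Factor.of_start (ω : ℕ → ℤ) (m n : ℕ) :
    Factor ω ((List.range n).map fun i => ω (m + i)) :=
  ⟨m, by simp⟩

theorem Factor.abs_sum_range_sub_sum_lt {ω : ℕ → ℤ} {M : ℕ}
    (hM : ∀ n : ℕ, 1 ≤ n → ∀ B B' : List ℤ, Factor ω B → B.length = n →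
      Factor ω B' → B'.length = n → |B.sum - B'.sum| < (M : ℤ))
    {B : List ℤ} (hB : Factor ω B) (hBne : B ≠ []) (m : ℕ) :
    |∑ i ∈ range B.length, ω (m + i) - B.sum| < M :=
  hM _ (List.length_pos_iff.mpr hBne) _ B (Factor.of_start ω m B.length) (by simp) hB rfl

theorem stmt1_general (ω : ℕ → ℤ) (M : ℕ)
    (hM : ∀ n : ℕ, 1 ≤ n → ∀ B B' : List ℤ, Factor ω B → B.length = n →
      Factor ω B' → B'.length = n → |B.sum - B'.sum| < (M : ℤ))
    (B B' : List ℤ) (hB : Factor ω B) (hB' : Factor ω B')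
    (hBne : B ≠ []) (hB'ne : B' ≠ []) :
    |wordSlope B - wordSlope B'| < (M : ℚ) / (B.length : ℚ) + (M : ℚ) / (B'.length : ℚ) := by
  have hp : 0 < B.length := List.length_pos_iff.mpr hBne
  have hq : 0 < B'.length := List.length_pos_iff.mpr hB'ne
  have hqB := abs_sum_range_mul_sub_nsmul_lt ω (hB.abs_sum_range_sub_sum_lt hM hBne) hq
  have hpB' := abs_sum_range_mul_sub_nsmul_lt ω (hB'.abs_sum_range_sub_sum_lt hM hB'ne) hp
  rw [Nat.mul_comm] at hpB'
  simp only [nsmul_eq_mul] at hqB hpB'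
  have hcross : |(B'.length : ℤ) * B.sum - B.length * B'.sum| < (B'.length + B.length) * M := by
    rw [abs_lt] at hqB hpB' ⊢
    constructor <;> linarith [hqB.1, hqB.2, hpB'.1, hpB'.2]
  exact abs_div_sub_div_lt_of_abs_mul_sub_lt (by exact_mod_cast hp) (by exact_mod_cast hq)
    (by exact_mod_cast hcross)

/-- If sums of equal-length factors of ω differ by less than M, then slopes of any
two nonempty factors differ by less than M/|B| + M/|B'|. -/
theorem stmt1 (ω : ℕ → ℤ) (hfin : (Set.range ω).Finite) (M : ℕ)
    (hM : ∀ n : ℕ, 1 ≤ n → ∀ B B' : List ℤ, Factor ω B → B.length = n →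
      Factor ω B' → B'.length = n → |B.sum - B'.sum| < (M : ℤ))
    (B B' : List ℤ) (hB : Factor ω B) (hB' : Factor ω B')
    (hBne : B ≠ []) (hB'ne : B' ≠ []) :
    |wordSlope B - wordSlope B'| < (M : ℚ) / (B.length : ℚ) + (M : ℚ) / (B'.length : ℚ) :=
  stmt1_general ω M hM B B' hB hB' hBne hB'ne
end

section
/- Let ω be an infinite word over a finite integer alphabet with bounded additive complexity (so slope(ω) exists). Then slope(ω) is irrational if and only if for every rational number α the set {B : B is a nonempty factor of ω and slope(B) = α} is finite. -/
open Finset Filter Topology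

/-!
Write `blockSum ω m n` for the sum of the factor of length `n` at position `m`. For fixed `n`,
`k ↦ blockSum ω k n` moves in steps of at most `2K` (`K` bounding the alphabet) and takes at most
`M` values, so it oscillates by at most `2KM`, uniformly in `n`. Since the prefix of length `kn`
is a concatenation of `k` such blocks, letting `k → ∞` gives `|blockSum ω m n - n L| ≤ 2KM`
for all `m, n`.

If `L` is irrational, a factor of slope `α` therefore has length at most `2KM / |α - L|`, and
there are finitely many such words. If `L = p/q`, the discrepancies `blockSum ω 0 (kq) - kp`
are bounded integers, so one value is taken for infinitely many `k`; the factor between two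
such prefixes has slope `p/q`, and these factors have unbounded length.
-/

lemma Nat.exists_apply_succ_ne {β : Type*} {f : ℕ → β} {a b : ℕ} (h : f a ≠ f b) :
    ∃ k, f (k + 1) ≠ f k := by
  by_contra! hconst
  have hf : ∀ k, f k = f 0 := fun k => by
    induction k with
    | zero => rfl
    | succ k ih => rw [hconst k, ih]
  exact h (by rw [hf a, hf b])

section IntSeq

variable {s : ℕ → ℤ} {d : ℤ}

lemma exists_mem_Ioc_of_abs_sub_le (hstep : ∀ k, |s (k + 1) - s k| ≤ d) {a b : ℕ} {x : ℤ}
    (ha : s a ≤ x) (hb : x < s b) : ∃ k, s k ∈ Set.Ioc x (x + d) := by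
  obtain ⟨k, hk⟩ := Nat.exists_apply_succ_ne (f := fun k => x < s k) (a := a) (b := b)
    (by simp [ha.not_gt, hb])
  have := abs_le.mp (hstep k)
  by_cases h1 : x < s (k + 1) <;> by_cases h0 : x < s k
  · simp [h1, h0] at hk
  · exact ⟨k + 1, h1, by linarith⟩
  · exact ⟨k, h0, by linarith⟩
  · simp [h1, h0] at hk

lemma sub_le_mul_card_of_abs_sub_le (hstep : ∀ k, |s (k + 1) - s k| ≤ d) {T : Finset ℤ}
    (hT : ∀ k, s k ∈ T) (a b : ℕ) : s b - s a ≤ d * #T := by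
  by_contra! hgap
  have hd : 0 ≤ d := (abs_nonneg _).trans (hstep 0)
  -- one value of `s` in each of the `#T + 1` disjoint windows `(s a + d j, s a + d (j + 1)]`
  have hlevel : ∀ j ∈ range (#T + 1),
      ∃ k, s k ∈ Set.Ioc (s a + d * j) (s a + d * j + d) := by
    intro j hj
    have hjT : d * j ≤ d * #T :=
      mul_le_mul_of_nonneg_left (by exact_mod_cast Nat.lt_succ_iff.mp (mem_range.mp hj)) hd
    exact exists_mem_Ioc_of_abs_sub_le hstep (a := a) (b := b)
      (le_add_of_nonneg_right (by positivity)) (by linarith)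
  choose! g hg using hlevel
  have hmono : StrictMonoOn (fun j => s (g j)) (range (#T + 1) : Set ℕ) := by
    intro i hi j hj hij
    have hij' : d * (i + 1 : ℕ) ≤ d * j := mul_le_mul_of_nonneg_left (by exact_mod_cast hij) hd
    push_cast at hij'
    linarith [(hg i hi).2, (hg j hj).1]
  have := card_le_card_of_injOn _ (fun j _ => hT (g j)) hmono.injOn
  simp at this

lemma abs_sub_le_mul_card_of_abs_sub_le (hstep : ∀ k, |s (k + 1) - s k| ≤ d) {T : Finset ℤ}
    (hT : ∀ k, s k ∈ T) (a b : ℕ) : |s b - s a| ≤ d * #T :=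
  abs_sub_le_iff.mpr ⟨sub_le_mul_card_of_abs_sub_le hstep hT a b,
    sub_le_mul_card_of_abs_sub_le hstep hT b a⟩

end IntSeq

lemma exists_infinite_fiber_of_finite_range {α β : Type*} [Infinite α] {f : α → β}
    (hf : (Set.range f).Finite) : ∃ b, (f ⁻¹' {b}).Infinite := by
  by_contra! hfin
  exact Set.infinite_univ (Set.Finite.of_finite_fibers f (by simpa using hf)
    fun b _ => by simpa using hfin b)

section Word

variable {ω : ℕ → ℤ}

def blockSum (ω : ℕ → ℤ) (m n : ℕ) : ℤ := ∑ i ∈ range n, ω (m + i)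

def block (ω : ℕ → ℤ) (m n : ℕ) : List ℤ := (List.range n).map fun i => ω (m + i)

lemma factor_block (m n : ℕ) : Factor ω (block ω m n) := ⟨m, by simp [block]⟩

@[simp] lemma length_block (m n : ℕ) : (block ω m n).length = n := by simp [block]

@[simp] lemma sum_block (m n : ℕ) : (block ω m n).sum = blockSum ω m n := rfl

lemma blockSum_add (m a b : ℕ) :
    blockSum ω m (a + b) = blockSum ω m a + blockSum ω (m + a) b := by
  simp only [blockSum, sum_range_add, add_assoc]

@[simp] lemma blockSum_one (m : ℕ) : blockSum ω m 1 = ω m := by simp [blockSum]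

lemma blockSum_succ_sub (k n : ℕ) :
    blockSum ω (k + 1) n - blockSum ω k n = ω (k + n) - ω k := by
  have h₁ := blockSum_add (ω := ω) k n 1
  have h₂ := blockSum_add (ω := ω) k 1 n
  rw [add_comm 1 n] at h₂
  simp only [blockSum_one] at h₁ h₂
  linarith

lemma blockSum_mul (m k n : ℕ) :
    blockSum ω m (k * n) = ∑ j ∈ range k, blockSum ω (m + j * n) n := by
  induction k with
  | zero => simp [blockSum]
  | succ k ih => rw [add_mul, one_mul, blockSum_add, ih, sum_range_succ]

lemma cast_blockSum_zero (n : ℕ) :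
    (blockSum ω 0 n : ℝ) = ∑ i ∈ range n, (ω i : ℝ) := by
  simp [blockSum]

lemma HasSlope.abs_sub_mul_le {L : ℝ} (hs : HasSlope ω L) {n : ℕ} (hn : 0 < n) {c D : ℝ}
    (h : ∀ j, |(blockSum ω (j * n) n : ℝ) - c| ≤ D) : |c - n * L| ≤ D := by
  have hnR : (0 : ℝ) < n := by exact_mod_cast hn
  have hprefix : ∀ k : ℕ, |(blockSum ω 0 (k * n) : ℝ) - k * c| ≤ k * D := fun k => by
    calc |(blockSum ω 0 (k * n) : ℝ) - k * c|
        = |∑ j ∈ range k, ((blockSum ω (j * n) n : ℝ) - c)| := by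
          simp [blockSum_mul, sum_sub_distrib]
      _ ≤ ∑ j ∈ range k, |(blockSum ω (j * n) n : ℝ) - c| := abs_sum_le_sum_abs _ _
      _ ≤ k * D := by simpa using sum_le_sum fun j (_ : j ∈ range k) => h j
  have hlim : Tendsto (fun k : ℕ => |(blockSum ω 0 (k * n) : ℝ) / (k * n : ℕ) - c / n|)
      atTop (𝓝 |L - c / n|) := by
    have hkn : Tendsto (fun k : ℕ => k * n) atTop atTop :=
      tendsto_atTop_mono (fun k => Nat.le_mul_of_pos_right k hn) tendsto_id
    refine ((hs.comp hkn).sub_const _).abs.congr fun k => ?_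
    simp [cast_blockSum_zero]
  have hbound : |L - c / n| ≤ D / n := by
    refine le_of_tendsto hlim (eventually_atTop.mpr ⟨1, fun k hk => ?_⟩)
    have hkR : (0 : ℝ) < k := by exact_mod_cast hk
    rw [show (blockSum ω 0 (k * n) : ℝ) / (k * n : ℕ) - c / n
        = ((blockSum ω 0 (k * n) : ℝ) - k * c) / (k * n) by push_cast; field_simp,
      abs_div, abs_of_pos (mul_pos hkR hnR), div_le_div_iff₀ (mul_pos hkR hnR) hnR]
    nlinarith [hprefix k]
  rw [show c - n * L = n * (c / n - L) by field_simp, abs_mul, abs_of_pos hnR, abs_sub_comm]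
  exact (le_div_iff₀' hnR).mp hbound

lemma BoundedAddComplexity.finite_range (hb : BoundedAddComplexity ω) :
    (Set.range ω).Finite := by
  obtain ⟨M, hM⟩ := hb
  obtain ⟨T, -, hT⟩ := hM 1 le_rfl
  refine T.finite_toSet.subset ?_
  rintro _ ⟨k, rfl⟩
  simpa using hT (block ω k 1) (factor_block k 1) (length_block k 1)

lemma BoundedAddComplexity.exists_abs_blockSum_sub_le (hb : BoundedAddComplexity ω) {L : ℝ}
    (hs : HasSlope ω L) : ∃ C : ℝ, ∀ m n, |(blockSum ω m n : ℝ) - n * L| ≤ C := by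
  obtain ⟨K, hK⟩ : ∃ K : ℤ, ∀ i, |ω i| ≤ K := by
    obtain ⟨K, hK⟩ := (hb.finite_range.image abs).bddAbove
    exact ⟨K, fun i => hK ⟨ω i, ⟨i, rfl⟩, rfl⟩⟩
  have hK0 : 0 ≤ K := (abs_nonneg _).trans (hK 0)
  obtain ⟨M, hM⟩ := hb
  refine ⟨(2 * K * M : ℤ), fun m n => ?_⟩
  rcases n.eq_zero_or_pos with rfl | hn
  · simp [blockSum]
    positivity
  obtain ⟨T, hTM, hT⟩ := hM n hn
  have hmem : ∀ k, blockSum ω k n ∈ T := fun k => by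
    simpa using hT (block ω k n) (factor_block k n) (length_block k n)
  have hstep : ∀ k, |blockSum ω (k + 1) n - blockSum ω k n| ≤ 2 * K := fun k => by
    rw [blockSum_succ_sub]
    linarith [abs_sub (ω (k + n)) (ω k), hK (k + n), hK k]
  refine hs.abs_sub_mul_le hn fun j => ?_
  have h :=
    abs_sub_le_mul_card_of_abs_sub_le (s := fun k => blockSum ω k n) hstep hmem m (j * n)
  have hTM' : 2 * K * #T ≤ 2 * K * M :=
    mul_le_mul_of_nonneg_left (by exact_mod_cast hTM) (by positivity)
  exact_mod_cast h.trans hTM'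

lemma finite_setOf_factor_length_le (hω : (Set.range ω).Finite) (N : ℕ) :
    {B | Factor ω B ∧ B.length ≤ N}.Finite := by
  have := hω.to_subtype
  refine ((List.finite_length_le (Set.range ω) N).image (List.map Subtype.val)).subset ?_
  rintro B ⟨⟨m, hm⟩, hN⟩
  have hB : ∀ x ∈ B, x ∈ Set.range ω := by
    rw [hm]
    simp
  lift B to List (Set.range ω) using hB
  exact ⟨B, by simpa using hN, rfl⟩

lemma length_mul_abs_sub_le {L C : ℝ} (hC : ∀ m n, |(blockSum ω m n : ℝ) - n * L| ≤ C)
    {B : List ℤ} (hB : Factor ω B) (hne : B ≠ []) {α : ℚ} (hα : wordSlope B = α) :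
    B.length * |(α : ℝ) - L| ≤ C := by
  obtain ⟨m, hm⟩ := hB
  have hBsum : B.sum = blockSum ω m B.length := by
    conv_lhs => rw [hm]
    rfl
  have hsum : (blockSum ω m B.length : ℝ) = α * B.length := by
    have hlen : (B.length : ℚ) ≠ 0 := by simpa using hne
    rw [wordSlope, div_eq_iff hlen, hBsum] at hα
    exact_mod_cast hα
  have h := hC m B.length
  rwa [hsum, show (α : ℝ) * B.length - B.length * L = B.length * (α - L) by ring, abs_mul,
    Nat.abs_cast] at h

lemma wordSlope_eq_of_sum_eq {B : List ℤ} {α : ℚ} {t : ℕ} (ht : 0 < t)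
    (hlen : B.length = t * α.den) (hsum : B.sum = t * α.num) : wordSlope B = α := by
  rw [wordSlope, hlen, hsum]
  push_cast
  rw [mul_div_mul_left _ _ (by positivity), Rat.num_div_den]

lemma infinite_setOf_factor_wordSlope_eq {L C : ℝ}
    (hC : ∀ m n, |(blockSum ω m n : ℝ) - n * L| ≤ C) {α : ℚ} (hα : (α : ℝ) = L) :
    {B | Factor ω B ∧ B ≠ [] ∧ wordSlope B = α}.Infinite := by
  set q := α.den
  set p := α.num
  have hV : ∀ k : ℕ, |blockSum ω 0 (k * q) - k * p| ≤ ⌊C⌋ := fun k => by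
    have hqα : (α : ℝ) * q = p := by exact_mod_cast Rat.mul_den_eq_num α
    have h := hC 0 (k * q)
    rw [← hα, Nat.cast_mul, mul_assoc, mul_comm (q : ℝ), hqα] at h
    exact Int.le_floor.mpr (by push_cast; exact h)
  obtain ⟨v, hv⟩ := exists_infinite_fiber_of_finite_range
    (f := fun k : ℕ => blockSum ω 0 (k * q) - k * p)
    ((Set.finite_Icc (-⌊C⌋) ⌊C⌋).subset (by rintro _ ⟨k, rfl⟩; exact abs_le.mp (hV k)))
  refine Set.Infinite.of_image List.length (Set.infinite_of_forall_exists_gt fun N => ?_)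
  obtain ⟨k₀, hk₀⟩ := hv.nonempty
  obtain ⟨k₁, hk₁, hlt⟩ := hv.exists_gt (k₀ + N)
  obtain ⟨t, rfl⟩ : ∃ t, k₁ = k₀ + t := ⟨k₁ - k₀, by omega⟩
  have ht : 0 < t := by omega
  have hq : 0 < q := α.den_pos
  have hsum : blockSum ω (k₀ * q) (t * q) = t * p := by
    have h := blockSum_add (ω := ω) 0 (k₀ * q) (t * q)
    rw [← add_mul, zero_add] at h
    simp only [Set.mem_preimage, Set.mem_singleton_iff] at hk₀ hk₁
    push_cast at hk₁
    linear_combination hk₁ - hk₀ - h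
  refine ⟨_, ⟨block ω (k₀ * q) (t * q), ⟨factor_block _ _, ?_, ?_⟩, rfl⟩, ?_⟩
  · exact List.ne_nil_of_length_pos (by simpa using ⟨ht, hq⟩)
  · exact wordSlope_eq_of_sum_eq ht (length_block _ _) (by rw [sum_block, hsum])
  · simp only [length_block]
    nlinarith

end Word

theorem stmt6_general (ω : ℕ → ℤ)
    (hb : BoundedAddComplexity ω) (L : ℝ) (hs : HasSlope ω L) :
    Irrational L ↔
      ∀ α : ℚ, {B : List ℤ | Factor ω B ∧ B ≠ [] ∧ wordSlope B = α}.Finite := by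
  obtain ⟨C, hC⟩ := hb.exists_abs_blockSum_sub_le hs
  constructor
  · intro hL α
    have hαL : 0 < |(α : ℝ) - L| := abs_pos.mpr (sub_ne_zero.mpr (hL.ne_rat α).symm)
    obtain ⟨N, hN⟩ := exists_nat_ge (C / |(α : ℝ) - L|)
    refine (finite_setOf_factor_length_le hb.finite_range N).subset ?_
    rintro B ⟨hB, hne, hα⟩
    have hlen : (B.length : ℝ) ≤ N :=
      ((le_div_iff₀ hαL).mpr (length_mul_abs_sub_le hC hB hne hα)).trans hN
    exact ⟨hB, by exact_mod_cast hlen⟩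
  · rintro hfin ⟨α, hα⟩
    exact infinite_setOf_factor_wordSlope_eq hC hα (hfin α)

/-- For ω with bounded additive complexity, the slope is irrational iff for every
rational α only finitely many nonempty factors have slope α. -/
theorem stmt6 (ω : ℕ → ℤ) (hfin : (Set.range ω).Finite)
    (hb : BoundedAddComplexity ω) (L : ℝ) (hs : HasSlope ω L) :
    Irrational L ↔
      ∀ α : ℚ, {B : List ℤ | Factor ω B ∧ B ≠ [] ∧ wordSlope B = α}.Finite :=
  stmt6_general ω hb L hs
end

section
/- Let ω be an infinite word over a finite integer alphabet with bounded additive complexity and with slope(ω) = p/q for relatively prime integers p and q ≥ 1. Then for every k, ℓ ∈ ℕ with k, ℓ ≥ 1 there exists M(k,ℓ) ∈ ℕ such that every factor B of ω of length M(k,ℓ) contains as a factor an additive ℓ-power B₁B₂⋯B_ℓ in which k divides |B₁| and slope(B_i) = p/q for each i = 1, …, ℓ. -/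
open Finset Filter Topology

open Combinatorics in
theorem exists_monochromatic_arithProg (κ : Type) [Finite κ] (ℓ : ℕ) :
    ∃ N : ℕ, ∀ C : ℕ → κ, ∃ b d : ℕ, 0 < d ∧ b + ℓ * d ≤ N ∧
      ∀ i ≤ ℓ, C (b + i * d) = C b := by
  classical
  obtain ⟨ι, _, hι⟩ := Line.exists_mono_in_high_dimension (Fin (ℓ + 1)) κ
  refine ⟨ℓ * Fintype.card ι, fun C => ?_⟩
  obtain ⟨l, c, hl⟩ := hι fun v => C (∑ i, (v i : ℕ))
  -- summing the coordinates turns the monochromatic line into an arithmetic progression whose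
  -- difference is the number of moving coordinates
  set s : Finset ι := {i | l.idxFun i = none}
  have hsum : ∀ x : Fin (ℓ + 1), ∑ i, (l x i : ℕ) = ∑ i, (l 0 i : ℕ) + x * #s := by
    intro x
    have hcoord : ∀ i, (l x i : ℕ) = l 0 i + x * if i ∈ s then 1 else 0 := by
      intro i
      cases h : l.idxFun i <;> simp [s, h]
    simp only [hcoord, sum_add_distrib, ← mul_sum, sum_boole, Nat.cast_id,
      filter_mem_eq_inter, univ_inter]
  refine ⟨∑ i, (l 0 i : ℕ), #s, card_pos.mpr ⟨_, by simpa [s] using l.proper.choose_spec⟩,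
    ?_, fun i hi => ?_⟩
  · have hle : ∑ i, (l (Fin.last ℓ) i : ℕ) ≤ ∑ _i : ι, ℓ :=
      sum_le_sum fun i _ => Nat.lt_succ_iff.mp (l (Fin.last ℓ) i).isLt
    rw [hsum, sum_const, card_univ, smul_eq_mul, Fin.val_last] at hle
    linarith
  · have hx := hl ⟨i, Nat.lt_succ_of_le hi⟩
    have h0 := hl 0
    dsimp only at hx h0
    rw [hsum] at hx
    rw [hx, ← h0]

theorem abs_sub_le_mul_card_image_range {h : ℕ → ℤ} {d : ℤ}
    (hstep : ∀ j, |h (j + 1) - h j| ≤ d) (b : ℕ) :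
    |h b - h 0| ≤ d * (#((range (b + 1)).image h) - 1) := by
  induction b using Nat.strong_induction_on with
  | _ b ih =>
    match b with
    | 0 => simp
    | b + 1 =>
      have hd : 0 ≤ d := (abs_nonneg _).trans (hstep 0)
      by_cases hmem : h (b + 1) ∈ (range (b + 1)).image h
      · -- a value already visited at an earlier time `j` is as close to `h 0` as it was then
        obtain ⟨j, hj, hje⟩ := mem_image.mp hmem
        have hsub : (range (j + 1)).image h ⊆ (range (b + 1 + 1)).image h :=
          image_subset_image (range_subset_range.mpr (by simp at hj; omega))
        have hcard : (#((range (j + 1)).image h) : ℤ) ≤ #((range (b + 1 + 1)).image h) := by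
          exact_mod_cast card_le_card hsub
        rw [← hje]
        exact (ih j (by simpa using hj)).trans (by nlinarith)
      · have hcard : (#((range (b + 1 + 1)).image h) : ℤ) = #((range (b + 1)).image h) + 1 := by
          rw [range_add_one (n := b + 1), image_insert, card_insert_of_notMem hmem]
          push_cast; ring
        calc |h (b + 1) - h 0| ≤ |h (b + 1) - h b| + |h b - h 0| := abs_sub_le _ _ _
          _ ≤ d + d * (#((range (b + 1)).image h) - 1) := add_le_add (hstep b) (ih b (by omega))
          _ = d * (#((range (b + 1 + 1)).image h) - 1) := by rw [hcard]; ring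

theorem abs_sub_le_mul_card_of_mem {h : ℕ → ℤ} {d : ℤ} {T : Finset ℤ}
    (hstep : ∀ j, |h (j + 1) - h j| ≤ d) (hT : ∀ j, h j ∈ T) (b : ℕ) :
    |h b - h 0| ≤ d * (#T - 1) := by
  have hd : 0 ≤ d := (abs_nonneg _).trans (hstep 0)
  have hcard : (#((range (b + 1)).image h) : ℤ) ≤ #T := by
    exact_mod_cast card_le_card (image_subset_iff.mpr fun j _ => hT j)
  exact (abs_sub_le_mul_card_image_range hstep b).trans (by nlinarith)

def partialSum (ω : ℕ → ℤ) (n : ℕ) : ℤ := ∑ i ∈ range n, ω i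

theorem sum_map_range_eq_partialSum_sub (ω : ℕ → ℤ) (a n : ℕ) :
    ((List.range n).map fun t => ω (a + t)).sum = partialSum ω (a + n) - partialSum ω a := by
  rw [partialSum, partialSum, sum_range_add]
  simp only [add_sub_cancel_left]
  rfl

theorem exists_abs_partialSum_add_sub_le {ω : ℕ → ℤ} (hfin : (Set.range ω).Finite)
    (hb : BoundedAddComplexity ω) :
    ∃ C : ℤ, ∀ m n, |partialSum ω (m + n) - partialSum ω m - partialSum ω n| ≤ C := by
  obtain ⟨A, hA⟩ : ∃ A, ∀ i, |ω i| ≤ A := by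
    obtain ⟨A, hA⟩ := (hfin.image (|·|)).bddAbove
    exact ⟨A, fun i => hA ⟨ω i, ⟨i, rfl⟩, rfl⟩⟩
  have hA0 : 0 ≤ A := (abs_nonneg _).trans (hA 0)
  obtain ⟨M, hM⟩ := hb
  refine ⟨2 * A * M, fun m n => ?_⟩
  rcases Nat.eq_zero_or_pos n with rfl | hn
  · simp [partialSum]; positivity
  obtain ⟨T, hTcard, hT⟩ := hM n hn
  -- `h j` is the sum of the factor of length `n` at position `j`: it takes at most `M` values
  -- and moves by at most `2 * A` per step, so it cannot drift far from `h 0`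
  set h : ℕ → ℤ := fun j => partialSum ω (j + n) - partialSum ω j with hh
  have hmem : ∀ j, h j ∈ T := by
    intro j
    have := hT ((List.range n).map fun t => ω (j + t)) ⟨j, by simp⟩ (by simp)
    rwa [sum_map_range_eq_partialSum_sub] at this
  have hstep : ∀ j, |h (j + 1) - h j| ≤ 2 * A := by
    intro j
    have : h (j + 1) - h j = ω (j + n) - ω j := by
      simp only [hh, partialSum, add_right_comm j 1 n, sum_range_succ]
      ring
    rw [this, two_mul]
    exact (abs_sub _ _).trans (add_le_add (hA _) (hA _))
  have hTM : (#T : ℤ) ≤ M := by exact_mod_cast hTcard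
  have := abs_sub_le_mul_card_of_mem hstep hmem m
  simp only [hh, zero_add, partialSum, range_zero, sum_empty, sub_zero] at this
  rw [partialSum, partialSum, partialSum]
  exact this.trans (by nlinarith)

theorem abs_apply_succ_mul_sub_le {f : ℕ → ℝ} {C : ℝ}
    (hf : ∀ m n, |f (m + n) - f m - f n| ≤ C) (n j : ℕ) :
    |f ((j + 1) * n) - (j + 1) * f n| ≤ j * C := by
  induction j with
  | zero => simp
  | succ j ih =>
    calc |f ((j + 1 + 1) * n) - ((j + 1 : ℕ) + 1) * f n|
        = |(f ((j + 1) * n + n) - f ((j + 1) * n) - f n) + (f ((j + 1) * n) - (j + 1) * f n)| := by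
          rw [add_mul _ 1 n, one_mul]; push_cast; ring_nf
      _ ≤ C + j * C := (abs_add_le _ _).trans (add_le_add (hf _ _) ih)
      _ = (j + 1 : ℕ) * C := by push_cast; ring

theorem abs_sub_mul_le_of_abs_add_sub_le {f : ℕ → ℝ} {C α : ℝ}
    (hf : ∀ m n, |f (m + n) - f m - f n| ≤ C)
    (hlim : Tendsto (fun n : ℕ => f n / n) atTop (𝓝 α)) (n : ℕ) :
    |f n - n * α| ≤ C := by
  rcases Nat.eq_zero_or_pos n with rfl | hn
  · simpa using hf 0 0
  have hC : 0 ≤ C := (abs_nonneg _).trans (hf 0 0)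
  have hn' : (0 : ℝ) < n := by exact_mod_cast hn
  have hmul : Tendsto (fun j : ℕ => f ((j + 1) * n) / (j + 1)) atTop (𝓝 (n * α)) := by
    have hsub : Tendsto (fun j : ℕ => (j + 1) * n) atTop atTop :=
      tendsto_atTop_mono (fun j => Nat.le_mul_of_pos_right _ hn) (tendsto_add_atTop_nat 1)
    refine ((hlim.comp hsub).const_mul (n : ℝ)).congr fun j => ?_
    simp only [Function.comp_apply]
    push_cast
    field_simp
  have hclose : ∀ j : ℕ, |f ((j + 1) * n) / (j + 1) - f n| ≤ C := by
    intro j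
    have hj : (0 : ℝ) < j + 1 := by positivity
    rw [← mul_div_cancel_left₀ (f n) hj.ne', ← sub_div, abs_div, abs_of_pos hj, div_le_iff₀ hj]
    linarith [abs_apply_succ_mul_sub_le hf n j]
  rw [abs_sub_comm]
  exact le_of_tendsto ((hmul.sub_const (f n)).abs) (Eventually.of_forall hclose)

theorem exists_abs_mul_partialSum_sub_le {ω : ℕ → ℤ} (hfin : (Set.range ω).Finite)
    (hb : BoundedAddComplexity ω) {p q : ℤ} (hq : 0 < q) (hs : HasSlope ω (p / q)) :
    ∃ D : ℤ, ∀ n : ℕ, |q * partialSum ω n - p * n| ≤ D := by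
  obtain ⟨C, hC⟩ := exists_abs_partialSum_add_sub_le hfin hb
  refine ⟨q * C, fun n => ?_⟩
  have hreal := abs_sub_mul_le_of_abs_add_sub_le (f := fun n => (partialSum ω n : ℝ))
    (C := C) (fun m n => by exact_mod_cast hC m n) (by simpa [HasSlope, partialSum] using hs) n
  have hq' : (0 : ℝ) < q := by exact_mod_cast hq
  have e : ((q * partialSum ω n - p * n : ℤ) : ℝ) = q * ((partialSum ω n : ℝ) - n * (p / q)) := by
    push_cast; field_simp
  have : ((|q * partialSum ω n - p * n| : ℤ) : ℝ) ≤ ((q * C : ℤ) : ℝ) := by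
    rw [Int.cast_abs, e, abs_mul, abs_of_pos hq', Int.cast_mul]
    exact mul_le_mul_of_nonneg_left hreal hq'.le
  exact_mod_cast this

theorem List.map_range_add_infix {α : Type*} (f : ℕ → α) {a n N : ℕ} (h : a + n ≤ N) :
    (List.range n).map (fun t => f (a + t)) <:+: (List.range N).map f := by
  obtain ⟨r, rfl⟩ := Nat.exists_eq_add_of_le h
  refine ⟨(List.range a).map f, (List.range r).map fun t => f (a + n + t), ?_⟩
  simp [List.range_add, Function.comp_def, add_assoc]

theorem List.flatten_map_range_blocks {α : Type*} (f : ℕ → α) (W n : ℕ) :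
    ((List.range n).map fun i => (List.range W).map fun t => f (i * W + t)).flatten
      = (List.range (n * W)).map f := by
  induction n with
  | zero => simp
  | succ n ih =>
    rw [List.range_succ, List.map_append, List.flatten_append, ih, add_mul, one_mul,
      List.range_add, List.map_append, List.map_map]
    simp [Function.comp_def]

def ContainsAdditivePower (B : List ℤ) (ℓ k : ℕ) (r : ℚ) : Prop :=
  ∃ L : List (List ℤ), L.length = ℓ ∧ L.flatten <:+: B ∧
    ∃ l : ℕ, 1 ≤ l ∧ k ∣ l ∧ ∃ s : ℤ, ∀ Bi ∈ L, Bi.length = l ∧ Bi.sum = s ∧ wordSlope Bi = r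

theorem containsAdditivePower_of_forall_eq {ω : ℕ → ℤ} {p : ℤ} {q k ℓ d m a N : ℕ}
    (hq : 0 < q) (hk : 0 < k) (hd : 0 < d) (hN : a + ℓ * (d * (q * k)) ≤ N)
    (heq : ∀ i ≤ ℓ, q * partialSum ω (m + a + i * (d * (q * k)))
      - p * (m + a + i * (d * (q * k)) : ℕ) = q * partialSum ω (m + a) - p * (m + a : ℕ)) :
    ContainsAdditivePower ((List.range N).map fun i => ω (m + i)) ℓ k (p / q) := by
  set W := d * (q * k) with hW
  set block : ℕ → List ℤ := fun i => (List.range W).map fun t => ω (m + (a + (i * W + t)))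
  have hsum : ∀ i < ℓ, (block i).sum = p * (d * k) := by
    intro i hi
    have hblock : (block i).sum
        = partialSum ω (m + a + (i + 1) * W) - partialSum ω (m + a + i * W) := by
      simp only [block, ← add_assoc]
      rw [sum_map_range_eq_partialSum_sub, add_mul, one_mul, add_assoc (m + a)]
    have h1 := heq i hi.le
    have h2 := heq (i + 1) hi
    apply mul_left_cancel₀ (show (q : ℤ) ≠ 0 by positivity)
    rw [hblock]
    push_cast at h1 h2
    have hWz : (W : ℤ) = d * (q * k) := by rw [hW]; push_cast; rfl
    linear_combination h2 - h1 + p * hWz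
  refine ⟨(List.range ℓ).map block, by simp, ?_, W, Nat.mul_pos hd (Nat.mul_pos hq hk),
    ⟨d * q, by rw [hW]; ring⟩, p * (d * k), ?_⟩
  · rw [List.flatten_map_range_blocks (fun x => ω (m + (a + x)))]
    exact List.map_range_add_infix (fun i => ω (m + i)) hN
  · intro Bi hBi
    obtain ⟨i, hi, rfl⟩ := List.mem_map.mp hBi
    have hlen : (block i).length = W := by simp [block]
    refine ⟨hlen, hsum i (List.mem_range.mp hi), ?_⟩
    rw [wordSlope, hsum i (List.mem_range.mp hi), hlen, hW]
    have hd' : (d : ℚ) ≠ 0 := by positivity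
    have hk' : (k : ℚ) ≠ 0 := by positivity
    push_cast
    field_simp

theorem stmt7_general (ω : ℕ → ℤ) (hfin : (Set.range ω).Finite)
    (hb : BoundedAddComplexity ω) (p q : ℤ) (hq : 1 ≤ q)
    (hs : HasSlope ω ((p : ℝ) / (q : ℝ))) :
    ∀ k ℓ : ℕ, 1 ≤ k → 1 ≤ ℓ →
      ∃ M : ℕ, ∀ B : List ℤ, Factor ω B → B.length = M →
        ∃ L : List (List ℤ), L.length = ℓ ∧ L.flatten <:+: B ∧
          ∃ l : ℕ, 1 ≤ l ∧ k ∣ l ∧ ∃ s : ℤ,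
            ∀ Bi ∈ L, Bi.length = l ∧ Bi.sum = s ∧ wordSlope Bi = (p : ℚ) / (q : ℚ) := by
  intro k ℓ hk _
  obtain ⟨D, hD⟩ := exists_abs_mul_partialSum_sub_le hfin hb (by omega) hs
  lift q to ℕ using (by omega)
  obtain ⟨N, hN⟩ := exists_monochromatic_arithProg (Icc (-D) D) ℓ
  refine ⟨N * (q * k), fun B ⟨m, hm⟩ hlen => ?_⟩
  obtain ⟨b, d, hd, hbd, hmono⟩ := hN fun j =>
    ⟨q * partialSum ω (m + j * (q * k)) - p * (m + j * (q * k) : ℕ),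
      mem_Icc.mpr (abs_le.mp (hD _))⟩
  rw [hlen] at hm
  subst hm
  have hpow : ContainsAdditivePower ((List.range (N * (q * k))).map fun i => ω (m + i)) ℓ k
      (p / q) := by
    refine containsAdditivePower_of_forall_eq (a := b * (q * k)) (d := d) (by omega) hk hd
      (by simpa [add_mul, mul_assoc] using Nat.mul_le_mul_right (q * k) hbd) fun i hi => ?_
    simpa [add_mul, mul_assoc, add_assoc] using congrArg Subtype.val (hmono i hi)
  simpa only [ContainsAdditivePower, Int.cast_natCast] using hpow

/-- Every long enough factor of a bounded-additive-complexity word of rational slope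
p/q contains an additive ℓ-power whose block length is divisible by k and whose
blocks all have slope p/q. -/
theorem stmt7 (ω : ℕ → ℤ) (hfin : (Set.range ω).Finite)
    (hb : BoundedAddComplexity ω) (p q : ℤ) (hq : 1 ≤ q) (hpq : IsCoprime p q)
    (hs : HasSlope ω ((p : ℝ) / (q : ℝ))) :
    ∀ k ℓ : ℕ, 1 ≤ k → 1 ≤ ℓ →
      ∃ M : ℕ, ∀ B : List ℤ, Factor ω B → B.length = M →
        ∃ L : List (List ℤ), L.length = ℓ ∧ L.flatten <:+: B ∧
          ∃ l : ℕ, 1 ≤ l ∧ k ∣ l ∧ ∃ s : ℤ,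
            ∀ Bi ∈ L, Bi.length = l ∧ Bi.sum = s ∧ wordSlope Bi = (p : ℚ) / (q : ℚ) :=
  stmt7_general ω hfin hb p q hq hs
end

section
/- Let ω be an infinite word over a finite integer alphabet with bounded additive complexity and slope(ω) = p/q ∈ ℚ (p, q relatively prime, q ≥ 1). Let I be a set of pairwise separated intervals [i,j] ⊆ ℕ such that for every [i,j] ∈ I the factor (ω(i), …, ω(j)) has slope p/q. Let g : ℕ → ℕ be the strictly increasing enumeration of the complement ℕ ∖ ⋃I (this complement is infinite since the intervals are separated). Then the contracted word ω ∖ I := ω ∘ g has bounded additive complexity and slope(ω ∖ I) = p/q. -/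
/-- The block of ω on positions `a, a+1, …, b-1`. -/
def seg (ω : ℕ → ℤ) (a b : ℕ) : List ℤ := (List.range (b - a)).map (fun j => ω (a + j))

/-!
Say that ω has discrepancy at most `C` from the slope `α` when every factor `B` satisfies
`|ΣB - |B|·α| ≤ C`. Bounded additive complexity and slope `α` give such a bound: the sliding sums
of a fixed length `n` move by at most `2·max|ω|` per step and take at most `M` values, so they lie
in an interval whose width does not depend on `n`, and averaging over the blocks of a long prefix
puts `n·α` in that interval. Conversely, a discrepancy bound gives both bounded additive
complexity and slope `α`. The bound passes to `ω ∖ I` unchanged: between two consecutive kept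
positions the removed part is a single interval of `I`, whose discrepancy is zero, so each factor
of `ω ∖ I` has the same discrepancy as the factor of `ω` that spans it.
-/

open Finset Filter Topology

theorem sum_seg (ω : ℕ → ℤ) (a b : ℕ) : (seg ω a b).sum = ∑ x ∈ Ico a b, ω x := by
  rw [sum_Ico_eq_sum_range]; rfl

theorem length_seg (ω : ℕ → ℤ) (a b : ℕ) : (seg ω a b).length = b - a := by simp [seg]

theorem factor_seg (ω : ℕ → ℤ) (a b : ℕ) : Factor ω (seg ω a b) := ⟨a, by simp [seg]⟩

theorem Factor.exists_eq_seg {ω : ℕ → ℤ} {B : List ℤ} (h : Factor ω B) :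
    ∃ m, B = seg ω m (m + B.length) := by
  obtain ⟨m, hm⟩ := h
  exact ⟨m, by rw [seg, Nat.add_sub_cancel_left]; exact hm⟩

theorem sum_Ico_sub_eq_zero_of_wordSlope_eq {ω : ℕ → ℤ} {a b : ℕ} {β : ℚ} (hab : a < b)
    (h : wordSlope (seg ω a b) = β) : ∑ x ∈ Ico a b, ((ω x : ℝ) - β) = 0 := by
  rw [wordSlope, sum_seg, length_seg, div_eq_iff (Nat.cast_ne_zero.2 (by omega))] at h
  rw [sum_sub_distrib, sum_const, Nat.card_Ico, nsmul_eq_mul, sub_eq_zero]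
  exact_mod_cast h.trans (mul_comm _ _)

theorem exists_not_iff_succ {P : ℕ → Prop} {a b : ℕ} (ha : P a) (hb : ¬P b) :
    ∃ t, ¬(P t ↔ P (t + 1)) := by
  by_contra! h
  have hP : ∀ t, P t ↔ P 0 := fun t => by
    induction t with
    | zero => rfl
    | succ t ih => exact (h t).symm.trans ih
  exact hb ((hP b).2 ((hP a).1 ha))

theorem exists_mem_Icc_of_abs_sub_le {h : ℕ → ℤ} {d : ℤ} (hd : ∀ t, |h (t + 1) - h t| ≤ d)
    {a b : ℕ} {c : ℤ} (ha : h a ≤ c) (hb : c < h b) : ∃ t, c ∈ Icc (h t) (h t + d) := by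
  obtain ⟨t, ht⟩ := exists_not_iff_succ (P := fun t => h t ≤ c) ha hb.not_ge
  have := abs_le.1 (hd t)
  by_cases htc : h t ≤ c
  · exact ⟨t, mem_Icc.2 ⟨htc, by simp only [htc, true_iff, not_le] at ht; linarith⟩⟩
  · simp only [htc, false_iff, not_not] at ht
    exact ⟨t + 1, mem_Icc.2 ⟨ht, by linarith⟩⟩

theorem sub_le_card_mul_of_abs_sub_le {h : ℕ → ℤ} {d : ℤ} (hd : ∀ t, |h (t + 1) - h t| ≤ d)
    {T : Finset ℤ} (hT : ∀ t, h t ∈ T) (a b : ℕ) : h b - h a ≤ #T * (d + 1) := by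
  have hd0 : 0 ≤ d := (abs_nonneg _).trans (hd 0)
  have hcover : Ico (h a) (h b) ⊆ T.biUnion fun v => Icc v (v + d) := fun c hc => by
    obtain ⟨t, ht⟩ := exists_mem_Icc_of_abs_sub_le hd (mem_Ico.1 hc).1 (mem_Ico.1 hc).2
    exact mem_biUnion.2 ⟨h t, hT t, ht⟩
  have hcard := (card_le_card hcover).trans card_biUnion_le
  simp only [Int.card_Ico, Int.card_Icc, add_assoc, add_sub_cancel_left, sum_const,
    smul_eq_mul] at hcard
  calc h b - h a ≤ (h b - h a).toNat := Int.self_le_toNat _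
    _ ≤ ((#T * (d + 1).toNat : ℕ) : ℤ) := by exact_mod_cast hcard
    _ = #T * (d + 1) := by push_cast; rw [Int.toNat_of_nonneg (by omega)]

theorem hasSlope_iff_tendsto_sum_sub_div {ω : ℕ → ℤ} {α : ℝ} :
    HasSlope ω α ↔ Tendsto (fun N : ℕ => (∑ i ∈ range N, ((ω i : ℝ) - α)) / N) atTop (𝓝 0) := by
  rw [HasSlope, ← tendsto_sub_nhds_zero_iff]
  refine tendsto_congr' (eventually_ne_atTop 0 |>.mono fun N hN => ?_)
  dsimp only
  rw [sum_sub_distrib, sum_const, card_range, nsmul_eq_mul, sub_div,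
    mul_div_cancel_left₀ _ (Nat.cast_ne_zero.2 hN)]

theorem sum_Ico_comp_of_sum_gap_eq_zero {M : Type*} [AddCommMonoid M] {f : ℕ → M} {g : ℕ → ℕ}
    (hg : StrictMono g) (hgap : ∀ t, ∑ x ∈ Ico (g t + 1) (g (t + 1)), f x = 0)
    {a b : ℕ} (hab : a ≤ b) : ∑ t ∈ Ico a b, f (g t) = ∑ x ∈ Ico (g a) (g b), f x := by
  induction b, hab using Nat.le_induction with
  | base => simp
  | succ b hab ih =>
    have hstep : g b < g (b + 1) := hg (Nat.lt_succ_self b)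
    rw [sum_Ico_succ_top hab, ih, ← sum_Ico_consecutive _ (hg.monotone hab) hstep.le,
      sum_eq_sum_Ico_succ_bot hstep, hgap, add_zero]

theorem abs_sum_Ico_le_of_tendsto {f : ℕ → ℝ}
    (hf : Tendsto (fun N : ℕ => (∑ i ∈ range N, f i) / N) atTop (𝓝 0)) {n : ℕ} {D : ℝ}
    (hD : ∀ a b, |∑ x ∈ Ico b (b + n), f x - ∑ x ∈ Ico a (a + n), f x| ≤ D) (m : ℕ) :
    |∑ x ∈ Ico m (m + n), f x| ≤ D := by
  set W := fun t => ∑ x ∈ Ico t (t + n), f x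
  rcases Nat.eq_zero_or_pos n with rfl | hn
  · simpa using hD m m
  have hblock : ∀ k : ℕ, |∑ i ∈ range (k * n), f i - k * W m| ≤ k * D := by
    intro k
    induction k with
    | zero => simp
    | succ k ih =>
      rw [← sum_range_add_sum_Ico _ (show k * n ≤ (k + 1) * n by gcongr; omega),
        show (k + 1) * n = k * n + n by ring]
      calc |∑ i ∈ range (k * n), f i + W (k * n) - (k + 1 : ℕ) * W m|
          = |(∑ i ∈ range (k * n), f i - k * W m) + (W (k * n) - W m)| := by push_cast; ring_nf
        _ ≤ k * D + D := (abs_add_le _ _).trans (add_le_add ih (hD m (k * n)))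
        _ = (k + 1 : ℕ) * D := by push_cast; ring
  have hn' : (0 : ℝ) < n := Nat.cast_pos.2 hn
  have hkn : Tendsto (fun k : ℕ => k * n) atTop atTop :=
    tendsto_id.atTop_mul_const' hn
  have hlim : Tendsto (fun k : ℕ => |(∑ i ∈ range (k * n), f i) / (k * n : ℕ) - W m / n|)
      atTop (𝓝 |0 - W m / n|) :=
    ((hf.comp hkn).sub_const _).abs
  have hle : |0 - W m / n| ≤ D / n := by
    refine le_of_tendsto hlim (eventually_ge_atTop 1 |>.mono fun k hk => ?_)
    have hk : (0 : ℝ) < k := Nat.cast_pos.2 hk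
    rw [Nat.cast_mul, show (∑ i ∈ range (k * n), f i) / (k * n) - W m / n
        = (∑ i ∈ range (k * n), f i - k * W m) / (k * n) by field_simp,
      abs_div, abs_of_pos (show (0 : ℝ) < k * n by positivity),
      div_le_div_iff₀ (by positivity) hn']
    calc |∑ i ∈ range (k * n), f i - k * W m| * n ≤ k * D * n := by gcongr; exact hblock k
      _ = D * (k * n) := by ring
  rwa [zero_sub, abs_neg, abs_div, abs_of_pos hn', div_le_div_iff_of_pos_right hn'] at hle

namespace BoundedAddComplexity

variable {ω : ℕ → ℤ}

theorem exists_abs_le (hb : BoundedAddComplexity ω) : ∃ s : ℤ, ∀ i, |ω i| ≤ s := by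
  obtain ⟨M, hM⟩ := hb
  obtain ⟨T, -, hT⟩ := hM 1 le_rfl
  refine ⟨∑ v ∈ T, |v|, fun i => ?_⟩
  have hi := hT (seg ω i (i + 1)) (factor_seg ω i (i + 1)) (by simp [length_seg])
  rw [sum_seg, Nat.Ico_succ_singleton, sum_singleton] at hi
  exact single_le_sum (f := fun v : ℤ => |v|) (fun _ _ => abs_nonneg _) hi

theorem exists_abs_sum_Ico_sub_le (hb : BoundedAddComplexity ω) :
    ∃ D : ℤ, ∀ n a b, |∑ x ∈ Ico b (b + n), ω x - ∑ x ∈ Ico a (a + n), ω x| ≤ D := by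
  obtain ⟨s, hs⟩ := hb.exists_abs_le
  have hs0 : 0 ≤ s := (abs_nonneg _).trans (hs 0)
  obtain ⟨M, hM⟩ := hb
  refine ⟨M * (2 * s + 1), fun n a b => ?_⟩
  rcases Nat.eq_zero_or_pos n with rfl | hn
  · simpa using mul_nonneg (Nat.cast_nonneg M) (by linarith)
  obtain ⟨T, hTM, hT⟩ := hM n hn
  set W := fun t => ∑ x ∈ Ico t (t + n), ω x
  have hstep : ∀ t, |W (t + 1) - W t| ≤ 2 * s := fun t => by
    have h := sum_Ico_succ_top (show t ≤ t + n by omega) ω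
    rw [sum_eq_sum_Ico_succ_bot (show t < t + n + 1 by omega)] at h
    have : W (t + 1) - W t = ω (t + n) - ω t := by simp only [W, add_right_comm t 1 n]; linarith
    rw [this]
    exact (abs_sub _ _).trans (by linarith [hs (t + n), hs t])
  have hWT : ∀ t, W t ∈ T := fun t => by
    simpa [sum_seg] using hT (seg ω t (t + n)) (factor_seg ω t (t + n)) (by simp [length_seg])
  have hspread := sub_le_card_mul_of_abs_sub_le hstep hWT
  refine abs_sub_le_iff.2 ⟨(hspread a b).trans ?_, (hspread b a).trans ?_⟩ <;>
    exact mul_le_mul_of_nonneg_right (by exact_mod_cast hTM) (by linarith)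

end BoundedAddComplexity

def DiscrepancyLE (ω : ℕ → ℤ) (α C : ℝ) : Prop :=
  ∀ a b : ℕ, |∑ x ∈ Ico a b, ((ω x : ℝ) - α)| ≤ C

namespace DiscrepancyLE

variable {ω : ℕ → ℤ} {α C : ℝ}

theorem nonneg (h : DiscrepancyLE ω α C) : 0 ≤ C := by
  simpa using h 0 0

theorem boundedAddComplexity (h : DiscrepancyLE ω α C) : BoundedAddComplexity ω := by
  set N := ⌈C⌉₊ + 1
  refine ⟨2 * N + 1, fun n _ => ⟨Icc (⌊n * α⌋ - N) (⌊n * α⌋ + N), by simp; omega, ?_⟩⟩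
  intro B hB hn
  obtain ⟨m, hm⟩ := hB.exists_eq_seg
  have hdev := h m (m + n)
  rw [sum_sub_distrib, sum_const, Nat.card_Ico, Nat.add_sub_cancel_left, nsmul_eq_mul,
    abs_le] at hdev
  have hsum : B.sum = ∑ x ∈ Ico m (m + n), ω x := by rw [hm, hn, sum_seg]
  have hfloor := Int.floor_le ((n : ℝ) * α)
  have hfloor' := Int.lt_floor_add_one ((n : ℝ) * α)
  have hceil := Nat.le_ceil C
  rw [mem_Icc, hsum]
  constructor
  · exact_mod_cast (show (⌊n * α⌋ - N : ℝ) ≤ ∑ x ∈ Ico m (m + n), (ω x : ℝ) by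
      push_cast [N]; linarith)
  · exact_mod_cast (show ∑ x ∈ Ico m (m + n), (ω x : ℝ) ≤ ⌊n * α⌋ + N by
      push_cast [N]; linarith)

theorem hasSlope (h : DiscrepancyLE ω α C) : HasSlope ω α := by
  rw [hasSlope_iff_tendsto_sum_sub_div]
  refine squeeze_zero_norm' (Eventually.of_forall fun N => ?_)
    (tendsto_const_div_atTop_nhds_zero_nat C)
  rw [Real.norm_eq_abs, abs_div, Nat.abs_cast, range_eq_Ico]
  exact div_le_div_of_nonneg_right (h 0 N) (Nat.cast_nonneg N)

theorem comp {g : ℕ → ℕ} (h : DiscrepancyLE ω α C) (hg : StrictMono g)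
    (hgap : ∀ t, ∑ x ∈ Ico (g t + 1) (g (t + 1)), ((ω x : ℝ) - α) = 0) :
    DiscrepancyLE (ω ∘ g) α C := fun a b => by
  rcases le_total a b with hab | hba
  · simpa only [Function.comp_apply, sum_Ico_comp_of_sum_gap_eq_zero hg hgap hab]
      using h (g a) (g b)
  · simpa [Ico_eq_empty_of_le hba] using h.nonneg

end DiscrepancyLE

theorem BoundedAddComplexity.exists_discrepancyLE {ω : ℕ → ℤ} {α : ℝ}
    (hb : BoundedAddComplexity ω) (hs : HasSlope ω α) : ∃ C, DiscrepancyLE ω α C := by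
  obtain ⟨D, hD⟩ := hb.exists_abs_sum_Ico_sub_le
  refine ⟨D, fun a b => ?_⟩
  rcases le_total a b with hab | hba
  · obtain ⟨n, rfl⟩ := Nat.exists_eq_add_of_le hab
    refine abs_sum_Ico_le_of_tendsto (hasSlope_iff_tendsto_sum_sub_div.1 hs) (fun a' b' => ?_) a
    simp only [sum_sub_distrib, sum_const, Nat.card_Ico, Nat.add_sub_cancel_left,
      sub_sub_sub_cancel_right]
    exact_mod_cast hD n a' b'
  · simpa [Ico_eq_empty_of_le hba] using (abs_nonneg _).trans (hD 0 0 0)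

section SeparatedIntervals

variable {I : Set (ℕ × ℕ)} {g : ℕ → ℕ}

theorem succ_snd_mem_range (hle : ∀ r ∈ I, r.1 ≤ r.2)
    (hsep : ∀ r ∈ I, ∀ r' ∈ I, r ≠ r' → r.1 ≤ r'.1 → r.2 + 1 < r'.1)
    (hrange : Set.range g = {m : ℕ | ∀ r ∈ I, ¬(r.1 ≤ m ∧ m ≤ r.2)})
    {r : ℕ × ℕ} (hr : r ∈ I) : r.2 + 1 ∈ Set.range g := by
  rw [hrange]
  rintro r' hr' ⟨h1, h2⟩
  have hne : r ≠ r' := by rintro rfl; omega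
  rcases le_total r.1 r'.1 with h | h
  · have := hsep r hr r' hr' hne h
    omega
  · have := hsep r' hr' r hr hne.symm h
    have := hle r hr
    omega

theorem succ_apply_eq_or_exists_mem_eq (hle : ∀ r ∈ I, r.1 ≤ r.2)
    (hsep : ∀ r ∈ I, ∀ r' ∈ I, r ≠ r' → r.1 ≤ r'.1 → r.2 + 1 < r'.1) (hg : StrictMono g)
    (hrange : Set.range g = {m : ℕ | ∀ r ∈ I, ¬(r.1 ≤ m ∧ m ≤ r.2)}) (t : ℕ) :
    g t + 1 = g (t + 1) ∨ ∃ r ∈ I, r.1 = g t + 1 ∧ r.2 + 1 = g (t + 1) := by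
  have hkept : ∀ u, ∀ r ∈ I, ¬(r.1 ≤ g u ∧ g u ≤ r.2) := fun u => by
    have hu := Set.mem_range_self (f := g) u
    rwa [hrange] at hu
  rcases eq_or_lt_of_le (Nat.succ_le_of_lt (hg (lt_add_one t))) with heq | hgt
  · exact .inl heq
  have hgap : g t + 1 ∉ Set.range g := by
    rintro ⟨u, hu⟩
    have := hg.lt_iff_lt.1 (show g t < g u by omega)
    have := hg.lt_iff_lt.1 (show g u < g (t + 1) by omega)
    omega
  simp only [hrange, Set.mem_ofPred_eq, not_forall, not_not] at hgap
  obtain ⟨r, hr, hr1, hr2⟩ := hgap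
  obtain ⟨u, hu⟩ := succ_snd_mem_range hle hsep hrange hr
  have hr1' : r.1 = g t + 1 := by
    by_contra
    exact hkept t r hr ⟨by omega, by omega⟩
  have hr2' : r.2 < g (t + 1) := by
    by_contra
    exact hkept (t + 1) r hr ⟨by omega, by omega⟩
  have htu : t < u := hg.lt_iff_lt.1 (by omega)
  have := hg.monotone (show t + 1 ≤ u from htu)
  exact .inr ⟨r, hr, hr1', by omega⟩

end SeparatedIntervals

theorem stmt10_general (ω : ℕ → ℤ)
    (hb : BoundedAddComplexity ω) (p q : ℤ)
    (hs : HasSlope ω ((p : ℝ) / (q : ℝ)))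
    (I : Set (ℕ × ℕ))
    (hIval : ∀ r ∈ I, r.1 ≤ r.2 ∧ wordSlope (seg ω r.1 (r.2 + 1)) = (p : ℚ) / (q : ℚ))
    (hsep : ∀ r ∈ I, ∀ r' ∈ I, r ≠ r' → r.1 ≤ r'.1 → r.2 + 1 < r'.1)
    (g : ℕ → ℕ) (hg : StrictMono g)
    (hrange : Set.range g = {m : ℕ | ∀ r ∈ I, ¬(r.1 ≤ m ∧ m ≤ r.2)}) :
    BoundedAddComplexity (ω ∘ g) ∧ HasSlope (ω ∘ g) ((p : ℝ) / (q : ℝ)) := by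
  obtain ⟨C, hC⟩ := hb.exists_discrepancyLE hs
  have hgap : ∀ t, ∑ x ∈ Ico (g t + 1) (g (t + 1)), ((ω x : ℝ) - p / q) = 0 := fun t => by
    rcases succ_apply_eq_or_exists_mem_eq (fun r hr => (hIval r hr).1) hsep hg hrange t with
      hadj | ⟨r, hr, hr1, hr2⟩
    · rw [hadj, Ico_self, sum_empty]
    · have hsum := sum_Ico_sub_eq_zero_of_wordSlope_eq (Nat.lt_succ_of_le (hIval r hr).1)
        (hIval r hr).2
      push_cast at hsum
      rwa [← hr1, ← hr2]
  have hCg := hC.comp hg hgap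
  exact ⟨hCg.boundedAddComplexity, hCg.hasSlope⟩

/-- Contracting a separated family of intervals of slope p/q from a
bounded-additive-complexity word of slope p/q yields a word with bounded additive
complexity and slope p/q. -/
theorem stmt10 (ω : ℕ → ℤ) (hfin : (Set.range ω).Finite)
    (hb : BoundedAddComplexity ω) (p q : ℤ) (hq : 1 ≤ q) (hpq : IsCoprime p q)
    (hs : HasSlope ω ((p : ℝ) / (q : ℝ)))
    (I : Set (ℕ × ℕ))
    (hIval : ∀ r ∈ I, r.1 ≤ r.2 ∧ wordSlope (seg ω r.1 (r.2 + 1)) = (p : ℚ) / (q : ℚ))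
    (hsep : ∀ r ∈ I, ∀ r' ∈ I, r ≠ r' → r.1 ≤ r'.1 → r.2 + 1 < r'.1)
    (g : ℕ → ℕ) (hg : StrictMono g)
    (hrange : Set.range g = {m : ℕ | ∀ r ∈ I, ¬(r.1 ≤ m ∧ m ≤ r.2)}) :
    BoundedAddComplexity (ω ∘ g) ∧ HasSlope (ω ∘ g) ((p : ℝ) / (q : ℝ)) :=
  stmt10_general ω hb p q hs I hIval hsep g hg hrange
end
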